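/- arXiv:2602.08694 — 4 statements merged into one kernel-verified Lean document; each statement's English description precedes it below -/
import Mathlib

section
/- Let S be a finite poset and D : S → FinSet a diagram, and let 𝒟 be the corresponding sheaf on the Alexandrov space X_S. Then the étale space of 𝒟 (the disjoint union of stalks ⨆_{x} 𝒟_x, topologized by the basis of sets U_v = { germ of v at x : x ∈ U } for open U and v ∈ 𝒟(U)) is homeomorphic to the Alexandrov space of the completion poset S^D. -/
/-!
A basic set `U_v` is an upper set of `S^D` precisely because `v` is a compatible family.
Conversely, every upper set of `S^D` is the union of the principal up-sets `↑(s, d)`, and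
`↑(s, d)` is itself the basic set of the section `t ↦ D(s ≤ t)(d)` on `↑s`.
-/

namespace DiagramCompletion

variable {S : Type*} [Preorder S] {D : S → Type*} (Dmap : ∀ {s t : S}, s ≤ t → D s → D t)

/-- Upper sets of the completion poset `S^D`. -/
def IsUpper (J : Set (Σ s : S, D s)) : Prop :=
  ∀ p ∈ J, ∀ q : Σ s : S, D s, ∀ h : p.1 ≤ q.1, Dmap h p.2 = q.2 → q ∈ J

/-- The principal up-set `↑p` of `p` in the completion poset `S^D`. -/
def cone (p : Σ s : S, D s) : Set (Σ s : S, D s) :=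
  {q | ∃ h : p.1 ≤ q.1, q.2 = Dmap h p.2}

/-- The image `U_v` of a section `v` on `U` in the étale space. -/
def germSet (U : Set S) (v : ∀ s ∈ U, D s) : Set (Σ s : S, D s) :=
  {p | ∃ hs : p.1 ∈ U, p.2 = v p.1 hs}

theorem eq_biUnion_cone (Did : ∀ (s : S) (x : D s), Dmap le_rfl x = x)
    {J : Set (Σ s : S, D s)} (hJ : IsUpper Dmap J) : J = ⋃ p ∈ J, cone Dmap p := by
  ext q
  simp only [Set.mem_iUnion]
  constructor
  · intro hq
    exact ⟨q, hq, le_rfl, (Did _ _).symm⟩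
  · rintro ⟨p, hp, h, hq⟩
    exact hJ p hp q h hq.symm

theorem cone_eq_germSet
    (p : Σ s : S, D s) : cone Dmap p = germSet (Set.Ici p.1) fun _ h => Dmap h p.2 :=
  rfl

theorem isUpper_germSet {U : Set S} (hU : IsUpperSet U) {v : ∀ s ∈ U, D s}
    (hv : ∀ (s t : S) (hs : s ∈ U) (h : s ≤ t), Dmap h (v s hs) = v t (hU h hs)) :
    IsUpper Dmap (germSet U v) := by
  rintro p ⟨hs, hp⟩ q h hq
  exact ⟨hU h hs, hq.symm.trans (hp ▸ hv p.1 q.1 hs h)⟩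

end DiagramCompletion

open DiagramCompletion TopologicalSpace in
theorem stmt_10_general (S : Type) [PartialOrder S]
    (D : S → Type)
    (Dmap : ∀ {s t : S}, s ≤ t → D s → D t)
    (Did : ∀ (s : S) (x : D s), Dmap le_rfl x = x)
    (Dcomp : ∀ {s t u : S} (h1 : s ≤ t) (h2 : t ≤ u) (x : D s),
      Dmap h2 (Dmap h1 x) = Dmap (h1.trans h2) x) :
    TopologicalSpace.generateFrom
      {B : Set (Σ s : S, D s) |
        ∃ (U : Set S) (hU : IsUpperSet U) (v : ∀ s ∈ U, D s),
          (∀ (s t : S) (hs : s ∈ U) (h : s ≤ t), Dmap h (v s hs) = v t (hU h hs)) ∧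
          B = {p : Σ s : S, D s | ∃ hs : p.1 ∈ U, p.2 = v p.1 hs}} =
    TopologicalSpace.generateFrom
      {J : Set (Σ s : S, D s) |
        ∀ p ∈ J, ∀ q : Σ s : S, D s, ∀ h : p.1 ≤ q.1, Dmap h p.2 = q.2 → q ∈ J} := by
  apply le_antisymm <;> rw [le_generateFrom_iff_subset_isOpen]
  · intro J hJ
    rw [eq_biUnion_cone Dmap Did hJ]
    refine @isOpen_biUnion _ _ (generateFrom _) _ _ fun p _ => isOpen_generateFrom_of_mem ?_
    exact ⟨Set.Ici p.1, isUpperSet_Ici p.1, fun _ h => Dmap h p.2,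
      fun _ _ hs h => Dcomp hs h p.2, cone_eq_germSet Dmap p⟩
  · rintro B ⟨U, hU, v, hv, rfl⟩
    exact isOpen_generateFrom_of_mem (isUpper_germSet Dmap hU hv)

/-- Let `S` be a finite poset and `D` a diagram of finite sets on `S`,
with corresponding sheaf `𝒟` on the Alexandrov space `X_S` (the sections of `𝒟` on an
upper set `U` are the compatible families `v` of elements of the stalks `D s`, `s ∈ U`).
The étale space of `𝒟` has underlying set `Σ s, D s` (disjoint union of stalks) and
topology generated by the basic sets `U_v = { (s, v s) : s ∈ U }` for `U` open and `v`
a section on `U`.  This topology coincides with the Alexandrov topology of the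
completion poset `S^D`, i.e. the topology whose open sets are the upper sets of the
completion order `(s₁,d₁) ≤ (s₂,d₂) ↔ s₁ ≤ s₂ ∧ D(s₁≤s₂)(d₁) = d₂`; in particular the
two spaces are homeomorphic (via the identity). -/
theorem stmt_10 (S : Type) [Fintype S] [PartialOrder S]
    (D : S → Type) [∀ s, Fintype (D s)]
    (Dmap : ∀ {s t : S}, s ≤ t → D s → D t)
    (Did : ∀ (s : S) (x : D s), Dmap le_rfl x = x)
    (Dcomp : ∀ {s t u : S} (h1 : s ≤ t) (h2 : t ≤ u) (x : D s),
      Dmap h2 (Dmap h1 x) = Dmap (h1.trans h2) x) :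
    TopologicalSpace.generateFrom
      {B : Set (Σ s : S, D s) |
        ∃ (U : Set S) (hU : IsUpperSet U) (v : ∀ s ∈ U, D s),
          (∀ (s t : S) (hs : s ∈ U) (h : s ≤ t), Dmap h (v s hs) = v t (hU h hs)) ∧
          B = {p : Σ s : S, D s | ∃ hs : p.1 ∈ U, p.2 = v p.1 hs}} =
    TopologicalSpace.generateFrom
      {J : Set (Σ s : S, D s) |
        ∀ p ∈ J, ∀ q : Σ s : S, D s, ∀ h : p.1 ≤ q.1, Dmap h p.2 = q.2 → q ∈ J} :=
  stmt_10_general S D Dmap Did Dcomp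
end

section
/- Let P be a geometric simplicial poset (a finite poset in which every lower cone P_{≤p} is isomorphic to a Boolean lattice minus its bottom element, equivalently P ∪ {0̂} is simplicial) and D a FinSet-valued diagram on the dual poset P*. Then the inflation P_D = ((P*)^D)* is also a geometric simplicial poset; in fact, for every d ∈ D(q) the lower cone (P_D)_{≤d} is order-isomorphic to P_{≤q}. -/
/-!
The lower cone of `(q, d)` in the inflation projects isomorphically onto the lower cone of
`q` in `P`: every `p ≤ q` lifts uniquely to `(p, Dmap _ d)`, and by functoriality of the
diagram these lifts are ordered exactly as their projections. Composing with the Boolean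
structure of `P_{≤q}` shows the inflation is again geometric simplicial.
-/

def inflationLowerConeRelIso {P : Type} [Preorder P] {D : P → Type}
    (Dmap : ∀ {p q : P}, p ≤ q → D q → D p)
    (Dcomp : ∀ {p q r : P} (h1 : p ≤ q) (h2 : q ≤ r) (x : D r),
      Dmap h1 (Dmap h2 x) = Dmap (h1.trans h2) x)
    (le' : (Σ p : P, D p) → (Σ p : P, D p) → Prop)
    (hle' : ∀ a b : Σ p : P, D p, le' a b ↔ ∃ h : a.1 ≤ b.1, Dmap h b.2 = a.2)
    (q : P) (d : D q) :
    (fun a b : {x : Σ p : P, D p // le' x ⟨q, d⟩} => le' a.1 b.1) ≃r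
      (fun a b : {p : P // p ≤ q} => a.1 ≤ b.1) where
  toFun x := ⟨x.1.1, ((hle' _ _).1 x.2).1⟩
  invFun p := ⟨⟨p.1, Dmap p.2 d⟩, (hle' _ _).2 ⟨p.2, rfl⟩⟩
  left_inv := by
    rintro ⟨⟨p, x⟩, hx⟩
    obtain ⟨_, hd⟩ := (hle' _ _).1 hx
    exact Subtype.ext (congrArg (Sigma.mk p) hd)
  right_inv _ := rfl
  map_rel_iff' := by
    rintro ⟨⟨p₁, x₁⟩, h₁⟩ ⟨⟨p₂, x₂⟩, h₂⟩
    obtain ⟨_, hd₁⟩ := (hle' _ _).1 h₁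
    obtain ⟨_, hd₂⟩ := (hle' _ _).1 h₂
    refine ⟨fun hp => (hle' _ _).2 ⟨hp, ?_⟩, fun h => ((hle' _ _).1 h).1⟩
    rw [← hd₁, ← hd₂, Dcomp]

theorem stmt_11_general (P : Type) [PartialOrder P]
    (hP : ∀ p : P, ∃ m : ℕ,
      Nonempty ({q : P // q ≤ p} ≃o {A : Finset (Fin m) // A.Nonempty}))
    (D : P → Type)
    (Dmap : ∀ {p q : P}, p ≤ q → D q → D p)
    (Dcomp : ∀ {p q r : P} (h1 : p ≤ q) (h2 : q ≤ r) (x : D r),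
      Dmap h1 (Dmap h2 x) = Dmap (h1.trans h2) x)
    (le' : (Σ p : P, D p) → (Σ p : P, D p) → Prop)
    (hle' : ∀ a b : Σ p : P, D p, le' a b ↔ ∃ h : a.1 ≤ b.1, Dmap h b.2 = a.2) :
    ∀ (q : P) (d : D q),
      Nonempty ((fun a b : {x : Σ p : P, D p // le' x ⟨q, d⟩} => le' a.1 b.1) ≃r
        (fun a b : {p : P // p ≤ q} => a.1 ≤ b.1)) ∧
      ∃ m : ℕ,
        Nonempty ((fun a b : {x : Σ p : P, D p // le' x ⟨q, d⟩} => le' a.1 b.1) ≃r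
          (fun a b : {A : Finset (Fin m) // A.Nonempty} => a.1 ⊆ b.1)) := by
  intro q d
  let e := inflationLowerConeRelIso Dmap Dcomp le' hle' q d
  obtain ⟨m, ⟨g⟩⟩ := hP q
  exact ⟨⟨e⟩, m, ⟨e.trans g⟩⟩

/-- Let `P` be a geometric simplicial poset: a finite poset in which every
lower cone `P_{≤p}` is isomorphic to a Boolean lattice minus its bottom element (i.e. to
the poset of nonempty subsets of a finite set).  Let `D` be a diagram of finite sets on
the dual poset `P*` (structure maps `Dmap : p ≤ q → D q → D p`, functorial), and let
`le'` be the order of the inflation `P_D = ((P*)^D)*` on `Σ p, D p`: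
`(p₁,d₁) ≤ (p₂,d₂) ↔ p₁ ≤ p₂ ∧ Dmap _ d₂ = d₁`.  Then for every `q` and `d ∈ D q` the
lower cone of `(q,d)` in `P_D` is order-isomorphic to the lower cone `P_{≤q}`; in
particular it is isomorphic to a Boolean lattice minus its bottom, so `P_D` is again a
geometric simplicial poset. -/
theorem stmt_11 (P : Type) [Fintype P] [PartialOrder P]
    (hP : ∀ p : P, ∃ m : ℕ,
      Nonempty ({q : P // q ≤ p} ≃o {A : Finset (Fin m) // A.Nonempty}))
    (D : P → Type) [∀ p, Fintype (D p)]
    (Dmap : ∀ {p q : P}, p ≤ q → D q → D p)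
    (Did : ∀ (p : P) (x : D p), Dmap le_rfl x = x)
    (Dcomp : ∀ {p q r : P} (h1 : p ≤ q) (h2 : q ≤ r) (x : D r),
      Dmap h1 (Dmap h2 x) = Dmap (h1.trans h2) x)
    (le' : (Σ p : P, D p) → (Σ p : P, D p) → Prop)
    (hle' : ∀ a b : Σ p : P, D p, le' a b ↔ ∃ h : a.1 ≤ b.1, Dmap h b.2 = a.2) :
    ∀ (q : P) (d : D q),
      Nonempty ((fun a b : {x : Σ p : P, D p // le' x ⟨q, d⟩} => le' a.1 b.1) ≃r
        (fun a b : {p : P // p ≤ q} => a.1 ≤ b.1)) ∧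
      ∃ m : ℕ,
        Nonempty ((fun a b : {x : Σ p : P, D p // le' x ⟨q, d⟩} => le' a.1 b.1) ≃r
          (fun a b : {A : Finset (Fin m) // A.Nonempty} => a.1 ⊆ b.1)) :=
  stmt_11_general P hP D Dmap Dcomp le' hle'
end

section
/- Let P = ℱ(Δ^{n-1}) be the poset of nonempty faces of the (n−1)-simplex and D : P* → FinSet a diagram whose corresponding sheaf is inhabited (D(J) ≠ ∅ for all J) and flabby. Suppose I₀ is a minimal face with |D(I₀)| ≥ 2, and D(I₀) = A₁ ⊔ A₂ with A₁, A₂ nonempty. Define subdiagrams D_ε(J) = D(J ≥ I₀)⁻¹(A_ε) for J ≥ I₀ and D_ε(J) = D(J) otherwise (ε = 1, 2). Then the sheaves corresponding to D₁ and D₂ are both inhabited and flabby. -/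
/-- A (sub)complex of the `(n-1)`-simplex on the vertex set `Fin n`: a collection of
nonempty closedFace closed under passing to nonempty subsets.  These are exactly the open
sets of the Alexandrov topology on the dual of the face poset `ℱ(Δ^{n-1})`. -/
def IsSubcx (n : ℕ) (U : Set (Finset (Fin n))) : Prop :=
  (∀ J ∈ U, J.Nonempty) ∧
    ∀ J ∈ U, ∀ K : Finset (Fin n), K.Nonempty → K ⊆ J → K ∈ U

/-- The sections over an open set (subcomplex) `U` of the sheaf corresponding to a
diagram `D` on the dual face poset: compatible families of elements of the stalks. -/
def Sect (n : ℕ) (D : Finset (Fin n) → Type)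
    (Dmap : ∀ {J K : Finset (Fin n)}, J ⊆ K → D K → D J)
    (U : Set (Finset (Fin n))) : Type :=
  {v : ∀ J ∈ U, D J //
    ∀ (J K : Finset (Fin n)) (hJ : J ∈ U) (hK : K ∈ U) (h : J ⊆ K),
      Dmap h (v K hK) = v J hJ}

/-- The sections over `U` of the subdiagram `D_A` of `D` determined by a subset
`A ⊆ D(I₀)`: compatible families whose restriction to `I₀` (whenever defined) lies
in `A`. -/
def SectIn (n : ℕ) (D : Finset (Fin n) → Type)
    (Dmap : ∀ {J K : Finset (Fin n)}, J ⊆ K → D K → D J)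
    (I₀ : Finset (Fin n)) (A : Set (D I₀)) (U : Set (Finset (Fin n))) : Type :=
  {v : ∀ J ∈ U, D J //
    (∀ (J K : Finset (Fin n)) (hJ : J ∈ U) (hK : K ∈ U) (h : J ⊆ K),
      Dmap h (v K hK) = v J hJ) ∧
    ∀ (J : Finset (Fin n)) (hJ : J ∈ U) (h : I₀ ⊆ J), Dmap h (v J hJ) ∈ A}

/-!
Fix `a ∈ A` agreeing with the given section at `I₀` (if it is defined there). By
minimality of `I₀`, every proper face of `I₀` has a single-point stalk, so the given
section and the restrictions of `a` glue to a section over `V` together with the closed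
face spanned by `I₀`. Flabbiness of `D` extends it to `U`, and the extension
lies in the subdiagram because everything above `I₀` restricts to `a`. Inhabitedness is
the case `V = ∅`.
-/

def closedFace {n : ℕ} (I : Finset (Fin n)) : Set (Finset (Fin n)) :=
  {K | K.Nonempty ∧ K ⊆ I}

lemma isSubcx_closedFace {n : ℕ} (I : Finset (Fin n)) : IsSubcx n (closedFace I) :=
  ⟨fun _ hK => hK.1, fun _ hK _ hL hLK => ⟨hL, hLK.trans hK.2⟩⟩

lemma isSubcx_empty (n : ℕ) : IsSubcx n ∅ :=
  ⟨fun _ h => h.elim, fun _ h => h.elim⟩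

lemma IsSubcx.union {n : ℕ} {U V : Set (Finset (Fin n))} (hU : IsSubcx n U)
    (hV : IsSubcx n V) : IsSubcx n (U ∪ V) := by
  refine ⟨fun J hJ => hJ.elim (hU.1 J) (hV.1 J), ?_⟩
  rintro J (hJ | hJ) K hK hKJ
  exacts [Or.inl (hU.2 J hJ K hK hKJ), Or.inr (hV.2 J hJ K hK hKJ)]

section Sections

variable {n : ℕ} {D : Finset (Fin n) → Type}
  {Dmap : ∀ {J K : Finset (Fin n)}, J ⊆ K → D K → D J}
  {I₀ : Finset (Fin n)} {A : Set (D I₀)} {U V : Set (Finset (Fin n))}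

def SectIn.toSect (w : SectIn n D Dmap I₀ A V) : Sect n D Dmap V :=
  ⟨w.1, w.2.1⟩

def SectIn.ofEmpty : SectIn n D Dmap I₀ A ∅ :=
  ⟨fun _ h => h.elim, fun _ _ h => h.elim, fun _ h => h.elim⟩

def Sect.toSectIn (hI₀ : I₀.Nonempty) (hU : IsSubcx n U) (v : Sect n D Dmap U)
    (hv : ∀ hI : I₀ ∈ U, v.1 I₀ hI ∈ A) : SectIn n D Dmap I₀ A U :=
  ⟨v.1, v.2, fun J hJ h => by
    have hI : I₀ ∈ U := hU.2 J hJ I₀ hI₀ h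
    rw [v.2 I₀ J hI hJ h]
    exact hv hI⟩

lemma Sect.exists_glue_closedFace
    (Did : ∀ (J : Finset (Fin n)) (x : D J), Dmap subset_rfl x = x)
    (Dcomp : ∀ {J K L : Finset (Fin n)} (h1 : J ⊆ K) (h2 : K ⊆ L) (x : D L),
      Dmap h1 (Dmap h2 x) = Dmap (h1.trans h2) x)
    (hI₀ : I₀.Nonempty)
    (hmin : ∀ J : Finset (Fin n), J ⊆ I₀ → J ≠ I₀ → J.Nonempty →
      ∀ x y : D J, x = y)
    (hV : IsSubcx n V) (w : Sect n D Dmap V) (a : D I₀)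
    (haw : ∀ hI : I₀ ∈ V, w.1 I₀ hI = a) :
    ∃ f : Sect n D Dmap (V ∪ closedFace I₀),
      (∀ J (hJ : J ∈ V), f.1 J (Or.inl hJ) = w.1 J hJ) ∧
        f.1 I₀ (Or.inr ⟨hI₀, subset_rfl⟩) = a := by
  classical
  have hsub : ∀ J ∈ V ∪ closedFace I₀, J ∉ V → J ⊆ I₀ :=
    fun J hJ h => (hJ.resolve_left h).2
  let f : ∀ J ∈ V ∪ closedFace I₀, D J := fun J hJ =>
    if h : J ∈ V then w.1 J h else Dmap (hsub J hJ h) a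
  have f_of_mem : ∀ J hJ (h : J ∈ V), f J hJ = w.1 J h := fun J hJ h => dif_pos h
  have f_of_notMem : ∀ J hJ (h : J ∉ V), f J hJ = Dmap (hsub J hJ h) a :=
    fun J hJ h => dif_neg h
  refine ⟨⟨f, fun J K hJ hK hJK => ?_⟩, fun J hJ => f_of_mem J (Or.inl hJ) hJ, ?_⟩
  · by_cases hKV : K ∈ V
    · have hJV : J ∈ V := hV.2 K hKV J ((hV.union (isSubcx_closedFace I₀)).1 J hJ) hJK
      rw [f_of_mem K hK hKV, f_of_mem J hJ hJV]
      exact w.2 J K hJV hKV hJK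
    rw [f_of_notMem K hK hKV]
    by_cases hJV : J ∈ V
    · have hKI : K ⊆ I₀ := hsub K hK hKV
      have hJne : J ≠ I₀ := by
        rintro rfl
        exact hKV (hKI.antisymm hJK ▸ hJV)
      exact hmin J (hJK.trans hKI) hJne (hV.1 J hJV) _ _
    · exact (Dcomp hJK _ a).trans (f_of_notMem J hJ hJV).symm
  · have hI : I₀ ∈ V ∪ closedFace I₀ := Or.inr ⟨hI₀, subset_rfl⟩
    by_cases hIV : I₀ ∈ V
    · exact (f_of_mem I₀ hI hIV).trans (haw hIV)
    · exact (f_of_notMem I₀ hI hIV).trans (Did I₀ a)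

lemma SectIn.exists_extension
    (Did : ∀ (J : Finset (Fin n)) (x : D J), Dmap subset_rfl x = x)
    (Dcomp : ∀ {J K L : Finset (Fin n)} (h1 : J ⊆ K) (h2 : K ⊆ L) (x : D L),
      Dmap h1 (Dmap h2 x) = Dmap (h1.trans h2) x)
    (hflabby : ∀ (U V : Set (Finset (Fin n))), IsSubcx n U → IsSubcx n V →
      ∀ hVU : V ⊆ U, ∀ w : Sect n D Dmap V, ∃ v : Sect n D Dmap U,
        ∀ (J : Finset (Fin n)) (hJ : J ∈ V), v.1 J (hVU hJ) = w.1 J hJ)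
    (hI₀ : I₀.Nonempty)
    (hmin : ∀ J : Finset (Fin n), J ⊆ I₀ → J ≠ I₀ → J.Nonempty →
      ∀ x y : D J, x = y)
    (hA : A.Nonempty) (hU : IsSubcx n U) (hV : IsSubcx n V) (hVU : V ⊆ U)
    (w : SectIn n D Dmap I₀ A V) :
    ∃ v : SectIn n D Dmap I₀ A U, ∀ J (hJ : J ∈ V), v.1 J (hVU hJ) = w.1 J hJ := by
  by_cases hI₀U : I₀ ∈ U
  case neg =>
    obtain ⟨v, hv⟩ := hflabby U V hU hV hVU w.toSect
    exact ⟨v.toSectIn hI₀ hU fun hI => absurd hI hI₀U, hv⟩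
  obtain ⟨a, haA, haw⟩ : ∃ a ∈ A, ∀ hI : I₀ ∈ V, w.1 I₀ hI = a := by
    by_cases hIV : I₀ ∈ V
    · refine ⟨w.1 I₀ hIV, ?_, fun _ => rfl⟩
      simpa only [Did] using w.2.2 I₀ hIV subset_rfl
    · exact ⟨hA.some, hA.some_mem, fun hI => absurd hI hIV⟩
  obtain ⟨f, hfV, hfI₀⟩ := w.toSect.exists_glue_closedFace Did Dcomp hI₀ hmin hV a haw
  have hVIU : V ∪ closedFace I₀ ⊆ U :=
    Set.union_subset hVU fun J hJ => hU.2 I₀ hI₀U J hJ.1 hJ.2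
  obtain ⟨v, hv⟩ := hflabby U _ hU (hV.union (isSubcx_closedFace I₀)) hVIU f
  refine ⟨v.toSectIn hI₀ hU fun _ => ?_, fun J hJ => (hv J (Or.inl hJ)).trans (hfV J hJ)⟩
  rw [hv I₀ (Or.inr ⟨hI₀, subset_rfl⟩), hfI₀]
  exact haA

end Sections

theorem stmt_15_general (n : ℕ) (D : Finset (Fin n) → Type)
    (Dmap : ∀ {J K : Finset (Fin n)}, J ⊆ K → D K → D J)
    (Did : ∀ (J : Finset (Fin n)) (x : D J), Dmap subset_rfl x = x)
    (Dcomp : ∀ {J K L : Finset (Fin n)} (h1 : J ⊆ K) (h2 : K ⊆ L) (x : D L),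
      Dmap h1 (Dmap h2 x) = Dmap (h1.trans h2) x)
    (hflabby : ∀ (U V : Set (Finset (Fin n))), IsSubcx n U → IsSubcx n V →
      ∀ hVU : V ⊆ U, ∀ w : Sect n D Dmap V, ∃ v : Sect n D Dmap U,
        ∀ (J : Finset (Fin n)) (hJ : J ∈ V), v.1 J (hVU hJ) = w.1 J hJ)
    (I₀ : Finset (Fin n)) (hI₀ : I₀.Nonempty)
    (hmin : ∀ J : Finset (Fin n), J ⊆ I₀ → J ≠ I₀ → J.Nonempty →
      ∀ x y : D J, x = y)
    (A₁ A₂ : Set (D I₀)) (hA₁ : A₁.Nonempty) (hA₂ : A₂.Nonempty) :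
    ∀ A : Set (D I₀), A = A₁ ∨ A = A₂ →
      (∀ J : Finset (Fin n), J.Nonempty →
        Nonempty {x : D J // ∀ h : I₀ ⊆ J, Dmap h x ∈ A}) ∧
      (∀ (U V : Set (Finset (Fin n))), IsSubcx n U → IsSubcx n V →
        ∀ hVU : V ⊆ U, ∀ w : SectIn n D Dmap I₀ A V,
          ∃ v : SectIn n D Dmap I₀ A U,
            ∀ (J : Finset (Fin n)) (hJ : J ∈ V), v.1 J (hVU hJ) = w.1 J hJ) := by
  intro A hA
  have hAne : A.Nonempty := by rcases hA with rfl | rfl <;> assumption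
  have hext := fun U V (hU : IsSubcx n U) (hV : IsSubcx n V) hVU w =>
    SectIn.exists_extension Did Dcomp hflabby hI₀ hmin hAne hU hV hVU w
  refine ⟨fun J hJ => ?_, hext⟩
  obtain ⟨v, -⟩ :=
    hext _ _ (isSubcx_closedFace J) (isSubcx_empty n) (Set.empty_subset _) .ofEmpty
  exact ⟨⟨v.1 J ⟨hJ, subset_rfl⟩, v.2.2 J _⟩⟩

/-- Let `P = ℱ(Δ^{n-1})` and `D` a diagram of finite sets on `P*` whose
corresponding sheaf is inhabited (all stalks nonempty) and flabby (every section over a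
subcomplex extends to any larger subcomplex).  Let `I₀` be a minimal face with
`|D(I₀)| ≥ 2` (all proper nonempty faces of `I₀` have singleton stalks), and let
`D(I₀) = A₁ ⊔ A₂` with `A₁, A₂` nonempty.  Then for each of the two subdiagrams
`D₁, D₂` (with `D_ε(J) = D(J ≥ I₀)⁻¹(A_ε)` for `J ⊇ I₀` and `D_ε(J) = D(J)` otherwise)
the corresponding sheaf is again inhabited and flabby. -/
theorem stmt_15 (n : ℕ) (D : Finset (Fin n) → Type) [∀ J, Fintype (D J)]
    (Dmap : ∀ {J K : Finset (Fin n)}, J ⊆ K → D K → D J)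
    (Did : ∀ (J : Finset (Fin n)) (x : D J), Dmap subset_rfl x = x)
    (Dcomp : ∀ {J K L : Finset (Fin n)} (h1 : J ⊆ K) (h2 : K ⊆ L) (x : D L),
      Dmap h1 (Dmap h2 x) = Dmap (h1.trans h2) x)
    (hinh : ∀ J : Finset (Fin n), J.Nonempty → Nonempty (D J))
    (hflabby : ∀ (U V : Set (Finset (Fin n))), IsSubcx n U → IsSubcx n V →
      ∀ hVU : V ⊆ U, ∀ w : Sect n D Dmap V, ∃ v : Sect n D Dmap U,
        ∀ (J : Finset (Fin n)) (hJ : J ∈ V), v.1 J (hVU hJ) = w.1 J hJ)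
    (I₀ : Finset (Fin n)) (hI₀ : I₀.Nonempty)
    (hbig : ∃ x y : D I₀, x ≠ y)
    (hmin : ∀ J : Finset (Fin n), J ⊆ I₀ → J ≠ I₀ → J.Nonempty →
      ∀ x y : D J, x = y)
    (A₁ A₂ : Set (D I₀)) (hA₁ : A₁.Nonempty) (hA₂ : A₂.Nonempty)
    (hdisj : Disjoint A₁ A₂) (hcover : A₁ ∪ A₂ = Set.univ) :
    ∀ A : Set (D I₀), A = A₁ ∨ A = A₂ →
      (∀ J : Finset (Fin n), J.Nonempty →
        Nonempty {x : D J // ∀ h : I₀ ⊆ J, Dmap h x ∈ A}) ∧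
      (∀ (U V : Set (Finset (Fin n))), IsSubcx n U → IsSubcx n V →
        ∀ hVU : V ⊆ U, ∀ w : SectIn n D Dmap I₀ A V,
          ∃ v : SectIn n D Dmap I₀ A U,
            ∀ (J : Finset (Fin n)) (hJ : J ∈ V), v.1 J (hVU hJ) = w.1 J hJ) :=
  stmt_15_general n D Dmap Did Dcomp hflabby I₀ hI₀ hmin A₁ A₂ hA₁ hA₂
end

section
/- In the setting of the splitting D(I₀) = A₁ ⊔ A₂ with subdiagrams D₁, D₂ of D over P = ℱ(Δ^{n-1}), the inflations satisfy P_D = P_{D₁} ∪ P_{D₂} and P_{D₁} ∩ P_{D₂} = P_{D₁₂}, where D₁₂ is the restriction of D to the open subcomplex K(I₀) = { J : J ⊉ I₀ }. -/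
open Set

section RestrictedMembership

variable {σ β : Type*} (S Q : σ → Prop) (f : ∀ x, Q x → β) {A₁ A₂ : Set β}

theorem union_setOf_forall_mem_eq_of_union_eq_univ (hcover : A₁ ∪ A₂ = univ) :
    {x | S x ∧ ∀ hx : Q x, f x hx ∈ A₁} ∪ {x | S x ∧ ∀ hx : Q x, f x hx ∈ A₂} =
      {x | S x} := by
  ext x
  simp only [mem_union, mem_ofPred_eq]
  constructor
  · rintro (⟨hS, -⟩ | ⟨hS, -⟩) <;> exact hS
  · intro hS
    by_cases hQ : Q x
    · have hmem : f x hQ ∈ A₁ ∪ A₂ := hcover ▸ mem_univ _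
      -- proof irrelevance: `f x hQ'` is `f x hQ` for every `hQ' : Q x`
      rcases hmem with h₁ | h₂
      · exact Or.inl ⟨hS, fun _ => h₁⟩
      · exact Or.inr ⟨hS, fun _ => h₂⟩
    · exact Or.inl ⟨hS, fun hQ' => absurd hQ' hQ⟩

theorem inter_setOf_forall_mem_eq_of_disjoint (hdisj : Disjoint A₁ A₂) :
    {x | S x ∧ ∀ hx : Q x, f x hx ∈ A₁} ∩ {x | S x ∧ ∀ hx : Q x, f x hx ∈ A₂} =
      {x | S x ∧ ¬ Q x} := by
  ext x
  simp only [mem_inter_iff, mem_ofPred_eq]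
  constructor
  · rintro ⟨⟨hS, h₁⟩, -, h₂⟩
    exact ⟨hS, fun hQ => hdisj.ne_of_mem (h₁ hQ) (h₂ hQ) rfl⟩
  · rintro ⟨hS, hQ⟩
    exact ⟨⟨hS, fun hQ' => absurd hQ' hQ⟩, hS, fun hQ' => absurd hQ' hQ⟩

end RestrictedMembership

theorem stmt_16_general (n : ℕ) (D : Finset (Fin n) → Type)
    (Dmap : ∀ {J K : Finset (Fin n)}, J ⊆ K → D K → D J)
    (I₀ : Finset (Fin n)) (A₁ A₂ : Set (D I₀))
    (hdisj : Disjoint A₁ A₂) (hcover : A₁ ∪ A₂ = Set.univ) :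
    ({p : Σ J : Finset (Fin n), D J | p.1.Nonempty} =
      {p : Σ J : Finset (Fin n), D J |
        p.1.Nonempty ∧ ∀ h : I₀ ⊆ p.1, Dmap h p.2 ∈ A₁} ∪
      {p : Σ J : Finset (Fin n), D J |
        p.1.Nonempty ∧ ∀ h : I₀ ⊆ p.1, Dmap h p.2 ∈ A₂}) ∧
    ({p : Σ J : Finset (Fin n), D J |
        p.1.Nonempty ∧ ∀ h : I₀ ⊆ p.1, Dmap h p.2 ∈ A₁} ∩
      {p : Σ J : Finset (Fin n), D J |
        p.1.Nonempty ∧ ∀ h : I₀ ⊆ p.1, Dmap h p.2 ∈ A₂} =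
      {p : Σ J : Finset (Fin n), D J | p.1.Nonempty ∧ ¬ I₀ ⊆ p.1}) :=
  let restrict : ∀ p : Σ J : Finset (Fin n), D J, I₀ ⊆ p.1 → D I₀ := fun p h => Dmap h p.2
  ⟨(union_setOf_forall_mem_eq_of_union_eq_univ _ _ restrict hcover).symm,
    inter_setOf_forall_mem_eq_of_disjoint _ _ restrict hdisj⟩

/-- Let `P = ℱ(Δ^{n-1})` (nonempty faces of the simplex on `Fin n`) and
`D` a diagram of finite sets on `P*`, with `D(I₀) = A₁ ⊔ A₂` (`A₁, A₂` nonempty,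
disjoint, covering).  The inflation `P_D` is realized as the set of pairs
`(J, d)` with `J` a nonempty face and `d ∈ D(J)`; the inflations along the subdiagrams
`D₁, D₂` (where `D_ε(J) = D(J ≥ I₀)⁻¹(A_ε)` for `J ⊇ I₀`, `D(J)` otherwise) are the
corresponding subsets.  Then `P_D = P_{D₁} ∪ P_{D₂}`, and
`P_{D₁} ∩ P_{D₂} = P_{D₁₂}`, where `D₁₂` is the restriction of `D` to the open
subcomplex `K(I₀) = { J : J ⊉ I₀ }` (so `P_{D₁₂}` consists of the pairs `(J, d)` with
`J ⊉ I₀`). -/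
theorem stmt_16 (n : ℕ) (D : Finset (Fin n) → Type) [∀ J, Fintype (D J)]
    (Dmap : ∀ {J K : Finset (Fin n)}, J ⊆ K → D K → D J)
    (Did : ∀ (J : Finset (Fin n)) (x : D J), Dmap subset_rfl x = x)
    (Dcomp : ∀ {J K L : Finset (Fin n)} (h1 : J ⊆ K) (h2 : K ⊆ L) (x : D L),
      Dmap h1 (Dmap h2 x) = Dmap (h1.trans h2) x)
    (I₀ : Finset (Fin n)) (hI₀ : I₀.Nonempty)
    (A₁ A₂ : Set (D I₀)) (hA₁ : A₁.Nonempty) (hA₂ : A₂.Nonempty)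
    (hdisj : Disjoint A₁ A₂) (hcover : A₁ ∪ A₂ = Set.univ) :
    ({p : Σ J : Finset (Fin n), D J | p.1.Nonempty} =
      {p : Σ J : Finset (Fin n), D J |
        p.1.Nonempty ∧ ∀ h : I₀ ⊆ p.1, Dmap h p.2 ∈ A₁} ∪
      {p : Σ J : Finset (Fin n), D J |
        p.1.Nonempty ∧ ∀ h : I₀ ⊆ p.1, Dmap h p.2 ∈ A₂}) ∧
    ({p : Σ J : Finset (Fin n), D J |
        p.1.Nonempty ∧ ∀ h : I₀ ⊆ p.1, Dmap h p.2 ∈ A₁} ∩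
      {p : Σ J : Finset (Fin n), D J |
        p.1.Nonempty ∧ ∀ h : I₀ ⊆ p.1, Dmap h p.2 ∈ A₂} =
      {p : Σ J : Finset (Fin n), D J | p.1.Nonempty ∧ ¬ I₀ ⊆ p.1}) :=
  stmt_16_general n D Dmap I₀ A₁ A₂ hdisj hcover
end
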